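/- Let L_b, L_p : H → ℝ and α, α⁻ ∈ [0,1] with α ≠ α⁻. Suppose F is an ε-approximate minimizer of L_α = α·L_b + (1-α)·L_p (i.e., L_α(F) ≤ inf L_α + ε) and F⁻ is an ε⁻-approximate minimizer of L_{α⁻} = α⁻·L_b + (1-α⁻)·L_p, with ε, ε⁻ ≥ 0. Then (α - α⁻)·(L_p(F) - L_p(F⁻)) ≥ -(α·ε⁻ + α⁻·ε). -/
import Mathlib

theorem stmt_2 {H : Type*} (Lb Lp : H → ℝ) (α αm ε εm : ℝ)
    (hα : α ∈ Set.Icc (0:ℝ) 1) (hαm : αm ∈ Set.Icc (0:ℝ) 1)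
    (hne : α ≠ αm) (hε : 0 ≤ ε) (hεm : 0 ≤ εm)
    (F Fm : H)
    (hF : ∀ G : H, α * Lb F + (1 - α) * Lp F ≤ α * Lb G + (1 - α) * Lp G + ε)
    (hFm : ∀ G : H, αm * Lb Fm + (1 - αm) * Lp Fm ≤ αm * Lb G + (1 - αm) * Lp G + εm) :
    (α - αm) * (Lp F - Lp Fm) ≥ -(α * εm + αm * ε) := by
  have h1 := hF Fm
  have h2 := hFm F
  obtain ⟨hα0, hα1⟩ := hα
  obtain ⟨hαm0, hαm1⟩ := hαm
  nlinarith [mul_le_mul_of_nonneg_left h1 hαm0, mul_le_mul_of_nonneg_left h2 hα0]
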